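/- Let L₁, …, L_N : ℝ^m → ℝ be affine functions and let Δ = {x ∈ ℝ^m : L_s(x) ≥ 0 for all s = 1, …, N}. If Δ is nonempty and compact, then there exist real numbers w₁, …, w_N, all strictly positive, such that the affine function Σ_{s=1}^N w_s L_s is constant on ℝ^m. -/

import Mathlib

/-!
If every linear part `dL_s` is nonnegative on a vector `v`, then the ray `x₀ + ℝ≥0 • v` through a
point `x₀ ∈ Δ` stays in `Δ`, so boundedness of `Δ` forces `v = 0`. Hence the dual of the cone
spanned by the `dL_s` is `{0}`, and by the bipolar theorem in the finite-dimensional dual space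
that cone is dense; being convex, it is the whole space. Writing `-∑ dL_s = ∑ c_s • dL_s` with
`c_s ≥ 0` gives the weights `w_s = c_s + 1`.
-/

open Set

theorem eq_zero_of_forall_add_smul_mem {E : Type*} [NormedAddCommGroup E] [NormedSpace ℝ E]
    {s : Set E} (hs : Bornology.IsBounded s) {x v : E} (h : ∀ t : ℝ, 0 ≤ t → x + t • v ∈ s) :
    v = 0 := by
  obtain ⟨r, hr⟩ := hs.subset_closedBall x
  have hbound (n : ℕ) : n * ‖v‖ ≤ r := by
    simpa [dist_eq_norm, norm_smul] using hr (h n n.cast_nonneg)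
  by_contra hv
  obtain ⟨n, hn⟩ := exists_nat_gt (r / ‖v‖)
  rw [div_lt_iff₀ (norm_pos_iff.mpr hv)] at hn
  linarith [hbound n]

theorem Convex.eq_univ_of_dense {E : Type*} [NormedAddCommGroup E] [NormedSpace ℝ E]
    [FiniteDimensional ℝ E] {s : Set E} (hs : Convex ℝ s) (hd : Dense s) : s = univ := by
  obtain ⟨x, hx⟩ : (interior s).Nonempty := by
    have hspan : closure s ⊆ affineSpan ℝ s :=
      closure_minimal (subset_affineSpan ℝ s) (affineSpan ℝ s).closed_of_finiteDimensional
    rw [hd.closure_eq] at hspan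
    exact hs.interior_nonempty_iff_affineSpan_eq_top.2 (eq_top_iff.2 fun p _ => hspan (mem_univ p))
  refine eq_univ_of_forall fun p => interior_subset ?_
  convert hs.combo_interior_closure_mem_interior hx (hd ((2 : ℝ) • p - x))
    (by norm_num : (0 : ℝ) < 1 / 2) (by norm_num : (0 : ℝ) ≤ 1 / 2) (by norm_num) using 1
  module

section StrongDual

variable {V ι : Type*} [NormedAddCommGroup V] [NormedSpace ℝ V] [FiniteDimensional ℝ V]

theorem dense_hull_range_of_forall_nonneg_imp_eq_zero (f : ι → StrongDual ℝ V)
    (h : ∀ v, (∀ i, 0 ≤ f i v) → v = 0) :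
    Dense (PointedCone.hull ℝ (range f) : Set (StrongDual ℝ V)) := by
  set C : ProperCone ℝ (StrongDual ℝ V) := Submodule.closure (PointedCone.hull ℝ (range f))
  have hdual : (ProperCone.dual (topDualPairing ℝ V) (C : Set _) : Set V) ⊆ {0} := fun v hv =>
    h v fun i => hv (subset_closure (PointedCone.subset_hull (mem_range_self i)))
  rw [dense_iff_closure_eq, eq_univ_iff_forall]
  intro φ
  change φ ∈ C
  rw [← ProperCone.dual_flip_dual (topDualPairing ℝ V) C]
  intro v hv
  obtain rfl := hdual hv
  simp

theorem exists_pos_sum_smul_eq_zero [Fintype ι] (f : ι → StrongDual ℝ V)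
    (h : ∀ v, (∀ i, 0 ≤ f i v) → v = 0) :
    ∃ w : ι → ℝ, (∀ i, 0 < w i) ∧ ∑ i, w i • f i = 0 := by
  have hK := (PointedCone.hull ℝ (range f)).convex.eq_univ_of_dense
    (dense_hull_range_of_forall_nonneg_imp_eq_zero f h)
  obtain ⟨c, hc⟩ := (Submodule.mem_span_range_iff_exists_fun _).1
    (show -∑ i, f i ∈ PointedCone.hull ℝ (range f) by rw [← SetLike.mem_coe, hK]; trivial)
  refine ⟨fun i => c i + 1, fun i => by have := (c i).2; positivity, ?_⟩
  simp only [add_smul, one_smul, Finset.sum_add_distrib]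
  rw [add_eq_zero_iff_eq_neg, ← hc]
  rfl

end StrongDual

theorem AffineMap.sum_mul_apply_eq_of_sum_smul_linear_eq_zero {ι k V P : Type*} [Field k]
    [AddCommGroup V] [Module k V] [AddTorsor V P] [Fintype ι] (L : ι → P →ᵃ[k] k) (w : ι → k)
    (hw : ∑ i, w i • (L i).linear = 0) (x y : P) : ∑ i, w i * L i x = ∑ i, w i * L i y := by
  rw [← sub_eq_zero, ← Finset.sum_sub_distrib]
  simpa [← mul_sub, linearMap_vsub] using LinearMap.congr_fun hw (x -ᵥ y)

/-- If the polytope `Δ = {x ∈ ℝ^m | L_s(x) ≥ 0, s = 1, …, N}` cut out by affine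
functions `L_s` is nonempty and compact, then there are strictly positive weights
`w_s` such that `Σ_s w_s L_s` is a constant affine function on `ℝ^m`. -/
theorem stmt10 (m N : ℕ) (L : Fin N → ((Fin m → ℝ) →ᵃ[ℝ] ℝ))
    (hne : ({x : Fin m → ℝ | ∀ s, 0 ≤ L s x}).Nonempty)
    (hcomp : IsCompact {x : Fin m → ℝ | ∀ s, 0 ≤ L s x}) :
    ∃ w : Fin N → ℝ, (∀ s, 0 < w s) ∧
      ∃ c : ℝ, ∀ x : Fin m → ℝ, ∑ s, w s * L s x = c := by
  obtain ⟨x₀, hx₀⟩ := hne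
  have hrec (v : Fin m → ℝ) (hv : ∀ s, 0 ≤ (L s).linear v) : v = 0 := by
    refine eq_zero_of_forall_add_smul_mem hcomp.isBounded (x := x₀) fun t ht s => ?_
    rw [add_comm, ← vadd_eq_add, AffineMap.map_vadd, map_smul, vadd_eq_add, smul_eq_mul]
    exact add_nonneg (mul_nonneg ht (hv s)) (hx₀ s)
  obtain ⟨w, hw, hsum⟩ :=
    exists_pos_sum_smul_eq_zero (fun s => LinearMap.toContinuousLinearMap (L s).linear) hrec
  refine ⟨w, hw, ∑ s, w s * L s 0, fun x => ?_⟩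
  refine AffineMap.sum_mul_apply_eq_of_sum_smul_linear_eq_zero L w ?_ x 0
  simpa using congrArg LinearMap.toContinuousLinearMap.symm hsum
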